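/- arXiv:0704.0736 — 2 statements merged into one kernel-verified Lean document; each statement's English description precedes it below -/
import Mathlib

section
/- For every j ∈ ℤ, V_j ⊆ V_{j+1}; that is, the spaces V_j defined from the refinable function φ form an increasing chain of closed subspaces of L²(ℚ_2, μ). -/
open MeasureTheory

/-- The refinable function: the indicator of `ℤ_2` inside `ℚ_[2]`. -/
noncomputable def phi2 : ℚ_[2] → ℂ :=
  Set.indicator {x : ℚ_[2] | ‖x‖ ≤ 1} 1

/-- The set `I_2` of fractional-part representatives of `ℚ_2/ℤ_2`. -/
def I2 : Set ℚ_[2] :=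
  {a | ∃ γ m : ℕ, m < 2 ^ γ ∧ a = (m : ℚ_[2]) / (2 : ℚ_[2]) ^ γ}

/-- The space `V_j`: the closed `ℂ`-linear span in `L²(ℚ_2, μ)` of the functions
`x ↦ φ(2^{-j} x − a)`, `a ∈ I_2`. -/
noncomputable def Vsp [MeasurableSpace ℚ_[2]] (μ : Measure ℚ_[2]) (j : ℤ) :
    Submodule ℂ (Lp ℂ 2 μ) :=
  (Submodule.span ℂ {f : Lp ℂ 2 μ | ∃ a ∈ I2,
    (f : ℚ_[2] → ℂ) =ᵐ[μ] fun x => phi2 ((2 : ℚ_[2]) ^ (-j) * x - a)}).topologicalClosure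

/-! The refinement equation `φ(y) = φ(y/2) + φ(y/2 - 1/2)` holds because `ℤ_2` is the disjoint
union of `2ℤ_2` and `1 + 2ℤ_2` (the residue field of `ℤ_2` is `𝔽_2`). Hence every generator of
`V_j` is the sum of two generators of `V_{j+1}`: inside `L²` the first one is obtained by restricting
the given element to the support of `φ(2^{-j-1} x - a/2)`, the second one as the remainder. -/

lemma PadicInt.norm_lt_one_or_norm_sub_one_lt_one (z : ℤ_[2]) : ‖z‖ < 1 ∨ ‖z - 1‖ < 1 := by
  obtain ⟨n, hn, hmem⟩ := PadicInt.exists_mem_range z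
  rw [IsLocalRing.mem_maximalIdeal, PadicInt.mem_nonunits] at hmem
  interval_cases n
  · exact .inl (by simpa using hmem)
  · exact .inr (by simpa using hmem)

namespace Padic

lemma norm_two : ‖(2 : ℚ_[2])‖ = 2⁻¹ := by
  simpa using norm_p (p := 2)

lemma norm_div_two_le_one_iff {y : ℚ_[2]} : ‖y / 2‖ ≤ 1 ↔ ‖y‖ < 1 := by
  have h := norm_le_pow_iff_norm_lt_pow_add_one (p := 2) y (-1)
  rw [norm_div, norm_two, div_inv_eq_mul, ← le_div_iff₀ two_pos]
  norm_num at h ⊢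
  exact h

lemma disjoint_norm_lt_one_norm_sub_one_lt_one {p : ℕ} [Fact p.Prime] :
    Disjoint {y : ℚ_[p] | ‖y‖ < 1} {y | ‖y - 1‖ < 1} := by
  refine Set.disjoint_left.2 fun y (h₀ : ‖y‖ < 1) (h₁ : ‖y - 1‖ < 1) => ?_
  have := IsUltrametricDist.norm_add_le_max y (1 - y)
  rw [add_sub_cancel, norm_one, norm_sub_rev] at this
  exact (max_lt h₀ h₁).not_ge this

lemma norm_le_one_iff_norm_lt_one_or_norm_sub_one_lt_one {y : ℚ_[2]} :
    ‖y‖ ≤ 1 ↔ ‖y‖ < 1 ∨ ‖y - 1‖ < 1 := by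
  refine ⟨fun hy => PadicInt.norm_lt_one_or_norm_sub_one_lt_one ⟨y, hy⟩, ?_⟩
  rintro (hy | hy)
  · exact hy.le
  · simpa using (IsUltrametricDist.norm_add_le_max (y - 1) 1).trans (max_le hy.le norm_one.le)

lemma div_two_sub_inv_two (y : ℚ_[2]) : y / 2 - 2⁻¹ = (y - 1) / 2 := by ring

lemma setOf_norm_le_one_eq_union :
    {y : ℚ_[2] | ‖y‖ ≤ 1} = {y | ‖y / 2‖ ≤ 1} ∪ {y | ‖y / 2 - 2⁻¹‖ ≤ 1} := by
  ext y
  rw [Set.mem_union, Set.mem_ofPred_eq, Set.mem_ofPred_eq, Set.mem_ofPred_eq, div_two_sub_inv_two,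
    norm_div_two_le_one_iff, norm_div_two_le_one_iff]
  exact norm_le_one_iff_norm_lt_one_or_norm_sub_one_lt_one

lemma disjoint_setOf_norm_div_two_le_one :
    Disjoint {y : ℚ_[2] | ‖y / 2‖ ≤ 1} {y | ‖y / 2 - 2⁻¹‖ ≤ 1} := by
  simp only [div_two_sub_inv_two, norm_div_two_le_one_iff]
  exact disjoint_norm_lt_one_norm_sub_one_lt_one

end Padic

open scoped ENNReal

lemma MeasureTheory.Lp.exists_eq_add_of_ae_eq_indicator_union {α E : Type*}
    {m : MeasurableSpace α} {μ : Measure α} [NormedAddCommGroup E] {p : ℝ≥0∞} {s t : Set α}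
    {F : α → E} (hs : MeasurableSet s) (hst : Disjoint s t) {f : Lp E p μ}
    (hf : f =ᵐ[μ] (s ∪ t).indicator F) :
    ∃ g h : Lp E p μ, f = g + h ∧ g =ᵐ[μ] s.indicator F ∧ h =ᵐ[μ] t.indicator F := by
  have hfs : s.indicator f =ᵐ[μ] s.indicator F := by
    simpa only [Set.indicator_indicator, Set.inter_eq_left.2 Set.subset_union_left]
      using hf.indicator (s := s)
  set g : Lp E p μ := ((Lp.memLp f).indicator hs).toLp _
  have hg : g =ᵐ[μ] s.indicator f := MemLp.coeFn_toLp _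
  refine ⟨g, f - g, (add_sub_cancel g f).symm, hg.trans hfs, ?_⟩
  filter_upwards [Lp.coeFn_sub f g, hg, hf, hfs] with x hsub hgx hfx hfsx
  rw [hsub, Pi.sub_apply, hgx, hfx, hfsx, Set.indicator_union_of_disjoint hst, add_sub_cancel_left]

lemma I2_div_two {a : ℚ_[2]} (ha : a ∈ I2) : a / 2 ∈ I2 := by
  obtain ⟨γ, m, hm, rfl⟩ := ha
  refine ⟨γ + 1, m, hm.trans (by rw [pow_succ]; omega), ?_⟩
  rw [pow_succ, div_div]

lemma I2_div_two_add_inv_two {a : ℚ_[2]} (ha : a ∈ I2) : a / 2 + 2⁻¹ ∈ I2 := by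
  obtain ⟨γ, m, hm, rfl⟩ := ha
  refine ⟨γ + 1, m + 2 ^ γ, by rw [pow_succ]; omega, ?_⟩
  push_cast
  field_simp
  ring

lemma phi2_zpow_mul_sub (j : ℤ) (a : ℚ_[2]) :
    (fun x => phi2 ((2 : ℚ_[2]) ^ (-j) * x - a)) =
      {x | ‖(2 : ℚ_[2]) ^ (-j) * x - a‖ ≤ 1}.indicator 1 :=
  rfl

lemma two_zpow_neg_succ_mul_sub_div_two (j : ℤ) (a x : ℚ_[2]) :
    (2 : ℚ_[2]) ^ (-(j + 1)) * x - a / 2 = ((2 : ℚ_[2]) ^ (-j) * x - a) / 2 := by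
  rw [neg_add, zpow_add₀ two_ne_zero, zpow_neg_one]
  ring

lemma setOf_norm_zpow_mul_sub_le_one_eq_union (j : ℤ) (a : ℚ_[2]) :
    {x : ℚ_[2] | ‖(2 : ℚ_[2]) ^ (-j) * x - a‖ ≤ 1} =
      {x | ‖(2 : ℚ_[2]) ^ (-(j + 1)) * x - a / 2‖ ≤ 1} ∪
        {x | ‖(2 : ℚ_[2]) ^ (-(j + 1)) * x - (a / 2 + 2⁻¹)‖ ≤ 1} := by
  ext x
  simpa only [Set.mem_union, Set.mem_ofPred_eq, ← sub_sub, two_zpow_neg_succ_mul_sub_div_two]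
    using Set.ext_iff.1 Padic.setOf_norm_le_one_eq_union ((2 : ℚ_[2]) ^ (-j) * x - a)

lemma disjoint_setOf_norm_zpow_mul_sub_le_one (j : ℤ) (a : ℚ_[2]) :
    Disjoint {x | ‖(2 : ℚ_[2]) ^ (-(j + 1)) * x - a / 2‖ ≤ 1}
      {x | ‖(2 : ℚ_[2]) ^ (-(j + 1)) * x - (a / 2 + 2⁻¹)‖ ≤ 1} := by
  simpa only [Set.preimage_ofPred_eq, ← sub_sub, two_zpow_neg_succ_mul_sub_div_two]
    using Padic.disjoint_setOf_norm_div_two_le_one.preimage fun x => (2 : ℚ_[2]) ^ (-j) * x - a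

theorem Vsp_mono_general [MeasurableSpace ℚ_[2]] [BorelSpace ℚ_[2]]
    (μ : Measure ℚ_[2]) (j : ℤ) :
    Vsp μ j ≤ Vsp μ (j + 1) := by
  have mem_of_generator {g : Lp ℂ 2 μ} {b : ℚ_[2]} (hb : b ∈ I2)
      (hg : g =ᵐ[μ] fun x => phi2 ((2 : ℚ_[2]) ^ (-(j + 1)) * x - b)) : g ∈ Vsp μ (j + 1) :=
    Submodule.le_topologicalClosure _ (Submodule.subset_span ⟨b, hb, hg⟩)
  refine Submodule.topologicalClosure_minimal _ ?_ (Submodule.isClosed_topologicalClosure _)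
  rw [Submodule.span_le]
  rintro f ⟨a, ha, hf⟩
  rw [phi2_zpow_mul_sub, setOf_norm_zpow_mul_sub_le_one_eq_union] at hf
  have hs : MeasurableSet {x | ‖(2 : ℚ_[2]) ^ (-(j + 1)) * x - a / 2‖ ≤ 1} :=
    (isClosed_le (by fun_prop) continuous_const).measurableSet
  obtain ⟨g, h, rfl, hg, hh⟩ := Lp.exists_eq_add_of_ae_eq_indicator_union hs
    (disjoint_setOf_norm_zpow_mul_sub_le_one j a) hf
  exact add_mem (mem_of_generator (I2_div_two ha) hg)
    (mem_of_generator (I2_div_two_add_inv_two ha) hh)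

theorem Vsp_mono [MeasurableSpace ℚ_[2]] [BorelSpace ℚ_[2]]
    (μ : Measure ℚ_[2]) [μ.IsAddHaarMeasure]
    (hμ : μ {x : ℚ_[2] | ‖x‖ ≤ 1} = 1) (j : ℤ) :
    Vsp μ j ≤ Vsp μ (j + 1) :=
  Vsp_mono_general μ j
end

section
/- The intersection ∩_{j∈ℤ} V_j equals {0} in L²(ℚ_2, μ). -/
open MeasureTheory

/-! Since `φ` is the indicator of `ℤ_2` and the norm is ultrametric, `x ↦ φ(2^{-j} x - a)` is
constant on the ball `‖x‖ ≤ 2^{-j}`, whatever the translation `a`. Functions in `L²` that are a.e.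
constant on a ball of finite measure form a closed subspace, so every element of `V_j` is a.e.
constant on that ball. An `f ∈ ⋂ V_j` is therefore a.e. constant on every ball `B_m`, and for
`B_n ⊆ B_m` this gives `‖f‖²_{L²(B_n)} μ(B_m) ≤ μ(B_n) ‖f‖²`. As a Haar measure on the noncompact
group `ℚ_2` has infinite mass, `μ(B_m) → ∞`, so `f` vanishes on every `B_n`. -/

open Filter Topology Set Metric
open scoped ENNReal

namespace MeasureTheory

variable {α E : Type*} [MeasurableSpace α] [NormedAddCommGroup E] {μ : Measure α}
  {p : ℝ≥0∞}

theorem eLpNorm_restrict_mul_rpow_le_of_ae_eq_const (hp0 : p ≠ 0) (hp : p ≠ ∞)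
    {s t : Set α} (hst : s ⊆ t) {g : α → E} {c : E} (hg : g =ᵐ[μ.restrict t] fun _ => c) :
    eLpNorm g p (μ.restrict s) * μ t ^ (1 / p.toReal)
      ≤ μ s ^ (1 / p.toReal) * eLpNorm g p μ := by
  have hs : eLpNorm g p (μ.restrict s) = ‖c‖ₑ * μ s ^ (1 / p.toReal) := by
    rw [eLpNorm_congr_ae (ae_restrict_of_ae_restrict_of_subset hst hg),
      eLpNorm_const' c hp0 hp, Measure.restrict_apply_univ]
  have ht : ‖c‖ₑ * μ t ^ (1 / p.toReal) ≤ eLpNorm g p μ := by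
    rw [← Measure.restrict_apply_univ, ← eLpNorm_const' c hp0 hp, ← eLpNorm_congr_ae hg]
    exact eLpNorm_mono_measure _ Measure.restrict_le_self
  calc eLpNorm g p (μ.restrict s) * μ t ^ (1 / p.toReal)
      = μ s ^ (1 / p.toReal) * (‖c‖ₑ * μ t ^ (1 / p.toReal)) := by rw [hs]; ring
    _ ≤ μ s ^ (1 / p.toReal) * eLpNorm g p μ := by gcongr

theorem Lp.eq_zero_of_ae_eq_const_on_exhaustion (hp0 : p ≠ 0) (hp : p ≠ ∞)
    {s : ℕ → Set α} (hmono : Monotone s) (hcover : ⋃ n, s n = univ)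
    (hfin : ∀ n, μ (s n) ≠ ∞) (hμ : μ univ = ∞) {f : Lp E p μ}
    (hf : ∀ n, ∃ c : E, f =ᵐ[μ.restrict (s n)] fun _ => c) : f = 0 := by
  have hexp : 0 < 1 / p.toReal := one_div_pos.2 (ENNReal.toReal_pos hp0 hp)
  have hgrowth : Tendsto (fun n => μ (s n) ^ (1 / p.toReal)) atTop (𝓝 ∞) := by
    have hmeas := tendsto_measure_iUnion_atTop (μ := μ) hmono
    rw [hcover, hμ] at hmeas
    rw [← ENNReal.top_rpow_of_pos hexp]
    exact (ENNReal.continuous_rpow_const.tendsto ∞).comp hmeas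
  have hzero : ∀ n, eLpNorm f p (μ.restrict (s n)) = 0 := by
    intro n
    by_contra hne
    have hlim := ENNReal.Tendsto.const_mul hgrowth (Or.inl ENNReal.top_ne_zero)
      (a := eLpNorm f p (μ.restrict (s n)))
    rw [ENNReal.mul_top hne] at hlim
    have hbound : ∀ᶠ m in atTop, eLpNorm f p (μ.restrict (s n)) * μ (s m) ^ (1 / p.toReal)
        ≤ μ (s n) ^ (1 / p.toReal) * eLpNorm f p μ :=
      (eventually_ge_atTop n).mono fun m hm =>
        eLpNorm_restrict_mul_rpow_le_of_ae_eq_const hp0 hp (hmono hm) (hf m).choose_spec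
    exact ENNReal.mul_ne_top (ENNReal.rpow_ne_top_of_nonneg hexp.le (hfin n))
      (Lp.eLpNorm_ne_top f) (top_le_iff.1 (le_of_tendsto hlim hbound))
  have hae : ∀ᵐ x ∂μ.restrict (⋃ n, s n), f x = (0 : α → E) x :=
    (ae_restrict_iUnion_iff s _).2 fun n =>
      (eLpNorm_eq_zero_iff (Lp.aestronglyMeasurable f).restrict hp0).1 (hzero n)
  rw [hcover, Measure.restrict_univ] at hae
  exact Lp.eq_zero_iff_ae_eq_zero.2 hae

variable (𝕜 : Type*) [NontriviallyNormedField 𝕜] [CompleteSpace 𝕜] [NormedSpace 𝕜 E]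

variable (E) in
def Lp.aeConstOn (p : ℝ≥0∞) (μ : Measure α) (s : Set α) : Submodule 𝕜 (Lp E p μ) where
  carrier := {f | ∃ c : E, f =ᵐ[μ.restrict s] fun _ => c}
  add_mem' := by
    rintro f g ⟨c, hf⟩ ⟨d, hg⟩
    exact ⟨c + d, EventuallyEq.trans (ae_restrict_of_ae (Lp.coeFn_add f g)) (hf.add hg)⟩
  zero_mem' := ⟨0, ae_restrict_of_ae (Lp.coeFn_zero E p μ)⟩
  smul_mem' := by
    rintro a f ⟨c, hf⟩
    exact ⟨a • c, EventuallyEq.trans (ae_restrict_of_ae (Lp.coeFn_smul a f)) (hf.const_smul a)⟩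

theorem Lp.isClosed_aeConstOn [Fact (1 ≤ p)] [FiniteDimensional 𝕜 E] {s : Set α}
    (hs : μ s ≠ ∞) : IsClosed (Lp.aeConstOn E 𝕜 p μ s : Set (Lp E p μ)) := by
  have : IsFiniteMeasure (μ.restrict s) := isFiniteMeasure_restrict.2 hs
  have hrange : (Lp.aeConstOn E 𝕜 p μ s : Set (Lp E p μ)) =
      LpToLpRestrictCLM α E 𝕜 μ p s ⁻¹'
        LinearMap.range (Lp.constₗ (E := E) p (μ.restrict s) 𝕜) := by
    ext f
    simp only [SetLike.mem_coe, Set.mem_preimage, LinearMap.mem_range, Lp.constₗ_apply]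
    refine exists_congr fun c => ?_
    rw [eq_comm, Lp.ext_iff]
    have hf := LpToLpRestrictCLM_coeFn 𝕜 s f
    have hc := Lp.coeFn_const p (μ.restrict s) c
    exact ⟨fun h => hf.trans (h.trans hc.symm), fun h => hf.symm.trans (h.trans hc)⟩
  rw [hrange]
  exact (LinearMap.range _).closed_of_finiteDimensional.preimage (ContinuousLinearMap.continuous _)

end MeasureTheory

theorem phi2_sub_of_norm_le_one {y : ℚ_[2]} (hy : ‖y‖ ≤ 1) (a : ℚ_[2]) :
    phi2 (y - a) = phi2 a := by
  have hball : closedBall (0 : ℚ_[2]) 1 = closedBall y 1 :=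
    IsUltrametricDist.closedBall_eq_of_mem (mem_closedBall_zero_iff.2 hy)
  have hmem : ‖y - a‖ ≤ 1 ↔ ‖a‖ ≤ 1 := by
    rw [← dist_eq_norm, ← mem_closedBall', ← hball, mem_closedBall_zero_iff]
  simp only [phi2, Set.indicator_apply, Set.mem_ofPred_eq, hmem, Pi.one_apply]

theorem norm_two_pow_mul_le_one {n : ℕ} {x : ℚ_[2]} (hx : x ∈ closedBall 0 (2 ^ n)) :
    ‖(2 : ℚ_[2]) ^ n * x‖ ≤ 1 := by
  have h2 : ‖(2 : ℚ_[2]) ^ n‖ = ((2 : ℝ) ^ n)⁻¹ := by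
    simpa using Padic.norm_p_pow (p := 2) n
  rw [norm_mul, h2, inv_mul_le_one₀ (by positivity)]
  exact mem_closedBall_zero_iff.1 hx

theorem Vsp_neg_natCast_le_aeConstOn [MeasurableSpace ℚ_[2]] [BorelSpace ℚ_[2]]
    (μ : Measure ℚ_[2]) [μ.IsAddHaarMeasure] (n : ℕ) :
    Vsp μ (-n) ≤ Lp.aeConstOn ℂ ℂ 2 μ (closedBall 0 (2 ^ n)) := by
  refine Submodule.topologicalClosure_minimal _ (Submodule.span_le.2 ?_)
    (Lp.isClosed_aeConstOn ℂ measure_closedBall_lt_top.ne)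
  rintro f ⟨a, -, hf⟩
  refine ⟨phi2 a, EventuallyEq.trans (ae_restrict_of_ae hf) ?_⟩
  filter_upwards [ae_restrict_mem measurableSet_closedBall] with x hx
  simpa using phi2_sub_of_norm_le_one (norm_two_pow_mul_le_one hx) a

theorem Vsp_inter_trivial_general [MeasurableSpace ℚ_[2]] [BorelSpace ℚ_[2]]
    (μ : Measure ℚ_[2]) [μ.IsAddHaarMeasure] :
    (⨅ j : ℤ, Vsp μ j) = ⊥ := by
  refine eq_bot_iff.2 fun f hf => (Submodule.mem_bot ℂ).2 ?_
  have hmono : Monotone fun n : ℕ => closedBall (0 : ℚ_[2]) (2 ^ n) :=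
    fun m n h => closedBall_subset_closedBall (pow_le_pow_right₀ one_le_two h)
  have hcover : ⋃ n : ℕ, closedBall (0 : ℚ_[2]) (2 ^ n) = univ :=
    iUnion_eq_univ_iff.2 fun x =>
      (pow_unbounded_of_one_lt ‖x‖ one_lt_two).imp fun _ hn => mem_closedBall_zero_iff.2 hn.le
  exact Lp.eq_zero_of_ae_eq_const_on_exhaustion two_ne_zero ENNReal.ofNat_ne_top hmono hcover
    (fun _ => measure_closedBall_lt_top.ne) (measure_univ_of_isAddLeftInvariant μ)
    fun n => Vsp_neg_natCast_le_aeConstOn μ n (Submodule.mem_iInf _ |>.1 hf _)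

theorem Vsp_inter_trivial [MeasurableSpace ℚ_[2]] [BorelSpace ℚ_[2]]
    (μ : Measure ℚ_[2]) [μ.IsAddHaarMeasure]
    (hμ : μ {x : ℚ_[2] | ‖x‖ ≤ 1} = 1) :
    (⨅ j : ℤ, Vsp μ j) = ⊥ :=
  Vsp_inter_trivial_general μ
end
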